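/- arXiv:1901.10031 — 3 statements merged into one kernel-verified Lean document; each statement's English description precedes it below -/
import Mathlib

section
/- Let X be a finite nonempty set, P a row-stochastic matrix on X (nonnegative entries, each row summing to 1), γ ∈ [0,1), d : X → ℝ, x₀ ∈ X, and d₀ ∈ ℝ. Let D be the unique solution of D = d + γ·P·D and assume D(x₀) ≤ d₀. Set the constant auxiliary cost ε̃ = (1 − γ)·(d₀ − D(x₀)) and let L be the unique solution of L = (d + ε̃·𝟙) + γ·P·L, where 𝟙 is the all-ones vector. Then L = D + (d₀ − D(x₀))·𝟙; consequently L(x₀) = d₀ and d + γ·P·L ≤ L componentwise, so L satisfies both Lyapunov conditions T[L] ≤ L and L(x₀) ≤ d₀. -/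
theorem constant_aux_cost_lyapunov {X : Type*} [Fintype X] [Nonempty X]
    (P : Matrix X X ℝ) (hP0 : ∀ x y, 0 ≤ P x y) (hP1 : ∀ x, ∑ y, P x y = 1)
    (γ : ℝ) (hγ0 : 0 ≤ γ) (hγ1 : γ < 1)
    (d : X → ℝ) (x₀ : X) (d₀ : ℝ)
    (D : X → ℝ) (hD : ∀ x, D x = d x + γ * P.mulVec D x)
    (hfeas : D x₀ ≤ d₀)
    (ε : ℝ) (hε : ε = (1 - γ) * (d₀ - D x₀))
    (L : X → ℝ) (hL : ∀ x, L x = (d x + ε) + γ * P.mulVec L x) :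
    (L = fun x => D x + (d₀ - D x₀)) ∧
    L x₀ = d₀ ∧
    ∀ x, d x + γ * P.mulVec L x ≤ L x := by
  set c : ℝ := d₀ - D x₀ with hc
  set g : X → ℝ := fun x => L x - D x - c with hgdef
  have hmv : ∀ (v : X → ℝ) (x : X), P.mulVec v x = ∑ y, P x y * v y := by
    intro v x; simp [Matrix.mulVec, dotProduct]
  have hg : ∀ x, g x = γ * ∑ y, P x y * g y := by
    intro x
    have h1 := hL x
    have h2 := hD x
    rw [hmv] at h1 h2
    have hsum : ∑ y, P x y * g y
        = (∑ y, P x y * L y) - (∑ y, P x y * D y) - c := by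
      have : ∑ y, P x y * g y
          = (∑ y, P x y * L y) - (∑ y, P x y * D y) - ∑ y, P x y * c := by
        simp [hgdef, mul_sub, Finset.sum_sub_distrib]
      rw [this, ← Finset.sum_mul, hP1 x, one_mul]
    simp only [hgdef]
    rw [hsum]
    nlinarith [h1, h2, hε]
  obtain ⟨z, hz⟩ := Finite.exists_max (fun x => |g x|)
  have hz0 : |g z| = 0 := by
    have hb : |g z| ≤ γ * |g z| := by
      calc |g z| = γ * |∑ y, P z y * g y| := by
            rw [hg z, abs_mul, abs_of_nonneg hγ0]
        _ ≤ γ * ∑ y, P z y * |g z| := by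
            apply mul_le_mul_of_nonneg_left _ hγ0
            calc |∑ y, P z y * g y| ≤ ∑ y, |P z y * g y| := Finset.abs_sum_le_sum_abs _ _
              _ ≤ ∑ y, P z y * |g z| := by
                  apply Finset.sum_le_sum
                  intro y _
                  rw [abs_mul, abs_of_nonneg (hP0 z y)]
                  exact mul_le_mul_of_nonneg_left (hz y) (hP0 z y)
        _ = γ * |g z| := by rw [← Finset.sum_mul, hP1 z, one_mul]
    nlinarith [abs_nonneg (g z)]
  have hgz : ∀ x, g x = 0 := by
    intro x
    have := hz x
    rw [hz0] at this
    exact abs_eq_zero.mp (le_antisymm this (abs_nonneg _))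
  have hLeq : L = fun x => D x + c := by
    funext x
    have := hgz x
    simp only [hgdef] at this
    linarith
  have hε0 : 0 ≤ ε := by
    rw [hε]
    have : 0 ≤ 1 - γ := by linarith
    nlinarith
  refine ⟨hLeq, ?_, ?_⟩
  · rw [hLeq]; simp [hc]
  · intro x
    have := hL x
    linarith
end

section
/- Let X and A be finite nonempty sets, γ ∈ [0,1), c : X → A → ℝ, and P : X → A → X → ℝ a transition kernel with P(x,a,x') ≥ 0 and ∑_{x'} P(x,a,x') = 1 for all x, a. Let κ ∈ ℕ, θ₀ ∈ ℝ^κ, and π : ℝ^κ → X → A → ℝ be such that for all θ, x: π(θ,x,·) ≥ 0 and ∑_a π(θ,x,a) = 1, and for each x, a the map θ ↦ π(θ,x,a) is differentiable at θ₀. Define P_θ(x,x') = ∑_a π(θ,x,a)·P(x,a,x'), c_θ(x) = ∑_a π(θ,x,a)·c(x,a), and V_θ = (I − γ·P_θ)⁻¹·c_θ. Fix x₀ ∈ X and set μ(x) = ((I − γ·P_{θ₀})⁻¹)(x₀, x) and Q(x,a) = c(x,a) + γ·∑_{x'} P(x,a,x')·V_{θ₀}(x'). Then θ ↦ V_θ(x₀)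 is differentiable at θ₀ and its derivative (a linear functional on ℝ^κ) equals ∑_{x ∈ X} μ(x)·∑_{a ∈ A} Q(x,a)·D_θ(π(θ,x,a))|_{θ = θ₀}. -/
/-!
Since `P_θ` is row-stochastic and `γ < 1`, the matrix `1 - γ P_θ` is strictly diagonally
dominant, hence invertible, and by Cramer's rule `V_θ = (1 - γ P_θ)⁻¹ c_θ` depends differentiably
on `θ`. Differentiating the Bellman equation `(1 - γ P_θ) V_θ = c_θ` gives
`(1 - γ P) ∂V = ∂c + γ (∂P) V`, so `∂V(x₀) = ∑ₓ μ(x) (∂c(x) + γ ∑ₓ' ∂P(x, x') V(x'))`,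
and expanding `∂c` and `∂P` through `∂π` collects the coefficient `μ(x) Q(x, a)` of `∂π(x, a)`.
-/

open Finset Matrix

section Calculus

variable {n E : Type*} [Fintype n] [DecidableEq n] [NormedAddCommGroup E] [NormedSpace ℝ E]
  {M : E → Matrix n n ℝ} {b : E → n → ℝ} {x : E}

theorem DifferentiableAt.matrix_det (hM : ∀ i j, DifferentiableAt ℝ (fun e => M e i j) x) :
    DifferentiableAt ℝ (fun e => (M e).det) x := by
  simp only [det_apply']
  fun_prop

theorem Matrix.inv_mulVec_apply_eq_det_updateCol {K : Type*} [Field K] (A : Matrix n n K)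
    (v : n → K) (i : n) : (A⁻¹ *ᵥ v) i = A.det⁻¹ * (A.updateCol i v).det := by
  rw [inv_def, smul_mulVec, ← cramer_eq_adjugate_mulVec, Ring.inverse_eq_inv', Pi.smul_apply,
    cramer_apply, smul_eq_mul]

theorem DifferentiableAt.matrix_inv_mulVec_apply
    (hM : ∀ i j, DifferentiableAt ℝ (fun e => M e i j) x)
    (hb : ∀ i, DifferentiableAt ℝ (fun e => b e i) x) (hx : (M x).det ≠ 0) (i : n) :
    DifferentiableAt ℝ (fun e => ((M e)⁻¹ *ᵥ b e) i) x := by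
  simp only [inv_mulVec_apply_eq_det_updateCol]
  refine ((DifferentiableAt.matrix_det hM).inv hx).mul (.matrix_det fun k l => ?_)
  simp only [updateCol_apply]
  split_ifs
  · exact hb k
  · exact hM k l

/-- Implicit differentiation of `M e *ᵥ v e = b e`, which holds near `x` because `det ∘ M` is
continuous at `x`. -/
theorem HasFDerivAt.matrix_inv_mulVec_apply {M' : n → n → E →L[ℝ] ℝ} {b' : n → E →L[ℝ] ℝ}
    (hM : ∀ i j, HasFDerivAt (fun e => M e i j) (M' i j) x)
    (hb : ∀ i, HasFDerivAt (fun e => b e i) (b' i) x) (hx : (M x).det ≠ 0) (i : n) :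
    HasFDerivAt (fun e => ((M e)⁻¹ *ᵥ b e) i)
      (∑ j, (M x)⁻¹ i j • (b' j - ∑ k, ((M x)⁻¹ *ᵥ b x) k • M' j k)) x := by
  set v := fun e => (M e)⁻¹ *ᵥ b e
  set v' := fun k => fderiv ℝ (fun e => v e k) x
  have hv : ∀ k, HasFDerivAt (fun e => v e k) (v' k) x := fun k =>
    (DifferentiableAt.matrix_inv_mulVec_apply (fun i j => (hM i j).differentiableAt)
      (fun i => (hb i).differentiableAt) hx k).hasFDerivAt
  have hsolve : (fun e => M e *ᵥ v e) =ᶠ[nhds x] b := by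
    filter_upwards [(DifferentiableAt.matrix_det fun i j => (hM i j).differentiableAt)
      |>.continuousAt.eventually_ne hx] with e he
    simp only [v, mulVec_mulVec, mul_nonsing_inv _ (Ne.isUnit he), one_mulVec]
  have hlin : ∀ j, ∑ k, (M x j k • v' k + v x k • M' j k) = b' j := fun j =>
    (HasFDerivAt.fun_sum fun k _ => (hM j k).mul (hv k)).unique <|
      (hb j).congr_of_eventuallyEq (hsolve.fun_comp (· j))
  convert hv i using 1
  calc ∑ j, (M x)⁻¹ i j • (b' j - ∑ k, v x k • M' j k)
      = ∑ j, (M x)⁻¹ i j • ∑ k, M x j k • v' k := by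
        simp only [← hlin, sum_add_distrib, add_sub_cancel_right]
    _ = ∑ k, ((M x)⁻¹ * M x) i k • v' k := by
        simp only [smul_sum, smul_smul, mul_apply, sum_smul]
        exact sum_comm
    _ = v' i := by simp [nonsing_inv_mul _ (Ne.isUnit hx), one_apply]

end Calculus

namespace Matrix

variable {n : Type*} [Fintype n] [DecidableEq n]

/-- `1 - γ • P` is strictly diagonally dominant. -/
theorem isUnit_det_one_sub_smul_of_mem_rowStochastic {P : Matrix n n ℝ}
    (hP : P ∈ rowStochastic ℝ n) {γ : ℝ} (hγ : |γ| < 1) : IsUnit (1 - γ • P).det := by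
  obtain ⟨hP0, hP1⟩ := mem_rowStochastic_iff_sum.1 hP
  refine (det_ne_zero_of_sum_row_lt_diag fun k => ?_).isUnit
  have hoff : ∀ j ∈ univ.erase k, ‖(1 - γ • P) k j‖ = |γ| * P k j := fun j hj => by
    simp [one_apply_ne' (ne_of_mem_erase hj), abs_of_nonneg (hP0 k j)]
  have hrow : ∑ j ∈ univ.erase k, P k j = 1 - P k k := by
    rw [sum_erase_eq_sub (mem_univ k), hP1]
  calc ∑ j ∈ univ.erase k, ‖(1 - γ • P) k j‖ = |γ| * (1 - P k k) := by
        rw [sum_congr rfl hoff, ← mul_sum, hrow]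
    _ < 1 - |γ| * P k k := by nlinarith [le_one_of_mem_rowStochastic hP (i := k) (j := k)]
    _ ≤ 1 - γ * P k k := by nlinarith [le_abs_self γ, hP0 k k]
    _ ≤ ‖(1 - γ • P) k k‖ := by simpa using le_abs_self (1 - γ * P k k)

theorem of_sum_mul_mem_rowStochastic {A : Type*} [Fintype A] {π : n → A → ℝ}
    {P : n → A → n → ℝ} (hπ0 : ∀ x a, 0 ≤ π x a) (hπ1 : ∀ x, ∑ a, π x a = 1)
    (hP0 : ∀ x a y, 0 ≤ P x a y) (hP1 : ∀ x a, ∑ y, P x a y = 1) :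
    of (fun x y => ∑ a, π x a * P x a y) ∈ rowStochastic ℝ n := by
  refine mem_rowStochastic_iff_sum.2
    ⟨fun x y => sum_nonneg fun a _ => mul_nonneg (hπ0 x a) (hP0 x a y), fun x => ?_⟩
  simp only [of_apply]
  rw [sum_comm]
  simp [← mul_sum, hP1, hπ1]

end Matrix

theorem policy_gradient_theorem_general {X A : Type*}
    [Fintype X] [DecidableEq X] [Fintype A]
    (γ : ℝ) (hγ0 : 0 ≤ γ) (hγ1 : γ < 1)
    (c : X → A → ℝ) (P : X → A → X → ℝ)
    (hP0 : ∀ x a x', 0 ≤ P x a x') (hP1 : ∀ x a, ∑ x', P x a x' = 1)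
    (κ : ℕ) (θ₀ : Fin κ → ℝ) (π : (Fin κ → ℝ) → X → A → ℝ)
    (hπ0 : ∀ θ x a, 0 ≤ π θ x a) (hπ1 : ∀ θ x, ∑ a, π θ x a = 1)
    (hdiff : ∀ x a, DifferentiableAt ℝ (fun θ => π θ x a) θ₀)
    (Pmat : (Fin κ → ℝ) → Matrix X X ℝ)
    (hPmat : ∀ θ x x', Pmat θ x x' = ∑ a, π θ x a * P x a x')
    (cvec : (Fin κ → ℝ) → X → ℝ)
    (hcvec : ∀ θ x, cvec θ x = ∑ a, π θ x a * c x a)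
    (V : (Fin κ → ℝ) → X → ℝ)
    (hV : ∀ θ, V θ = (1 - γ • Pmat θ)⁻¹.mulVec (cvec θ))
    (x₀ : X) (μ : X → ℝ) (hμ : ∀ x, μ x = (1 - γ • Pmat θ₀)⁻¹ x₀ x)
    (Q : X → A → ℝ)
    (hQ : ∀ x a, Q x a = c x a + γ * ∑ x', P x a x' * V θ₀ x') :
    DifferentiableAt ℝ (fun θ => V θ x₀) θ₀ ∧
    fderiv ℝ (fun θ => V θ x₀) θ₀ =
      ∑ x, ∑ a, (μ x * Q x a) • fderiv ℝ (fun θ => π θ x a) θ₀ := by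
  set D := fun x a => fderiv ℝ (fun θ => π θ x a) θ₀
  have hπ : ∀ x a, HasFDerivAt (fun θ => π θ x a) (D x a) θ₀ := fun x a => (hdiff x a).hasFDerivAt
  have hM : ∀ x x', HasFDerivAt (fun θ => (1 - γ • Pmat θ) x x')
      (-(γ • ∑ a, P x a x' • D x a)) θ₀ := fun x x' => by
    simpa [hPmat] using
      ((HasFDerivAt.fun_sum fun a _ => (hπ x a).mul_const (P x a x')).const_mul γ).const_sub
        ((1 : Matrix X X ℝ) x x')
  have hc : ∀ x, HasFDerivAt (fun θ => cvec θ x) (∑ a, c x a • D x a) θ₀ := fun x => by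
    simpa [hcvec] using HasFDerivAt.fun_sum fun a _ => (hπ x a).mul_const (c x a)
  have hstoch : Pmat θ₀ ∈ rowStochastic ℝ X := by
    convert of_sum_mul_mem_rowStochastic (hπ0 θ₀) (hπ1 θ₀) hP0 hP1
    exact ext (hPmat θ₀)
  have hunit := isUnit_det_one_sub_smul_of_mem_rowStochastic hstoch (abs_lt.2 ⟨by linarith, hγ1⟩)
  have hVd := HasFDerivAt.matrix_inv_mulVec_apply hM hc hunit.ne_zero x₀
  simp only [← hV, ← hμ] at hVd
  refine ⟨hVd.differentiableAt, hVd.fderiv.trans (sum_congr rfl fun x _ => ?_)⟩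
  have hQD : ∑ a, c x a • D x a - ∑ y, V θ₀ y • -(γ • ∑ a, P x a y • D x a)
      = ∑ a, Q x a • D x a := by
    simp only [hQ, add_smul, sum_add_distrib, smul_neg, sum_neg_distrib, sub_neg_eq_add, smul_sum,
      mul_sum, sum_smul, smul_smul]
    rw [sum_comm]
    congr! 4 with a - y
    ring
  rw [hQD, smul_sum]
  exact sum_congr rfl fun a _ => smul_smul _ _ _

theorem policy_gradient_theorem {X A : Type*}
    [Fintype X] [DecidableEq X] [Nonempty X] [Fintype A] [Nonempty A]
    (γ : ℝ) (hγ0 : 0 ≤ γ) (hγ1 : γ < 1)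
    (c : X → A → ℝ) (P : X → A → X → ℝ)
    (hP0 : ∀ x a x', 0 ≤ P x a x') (hP1 : ∀ x a, ∑ x', P x a x' = 1)
    (κ : ℕ) (θ₀ : Fin κ → ℝ) (π : (Fin κ → ℝ) → X → A → ℝ)
    (hπ0 : ∀ θ x a, 0 ≤ π θ x a) (hπ1 : ∀ θ x, ∑ a, π θ x a = 1)
    (hdiff : ∀ x a, DifferentiableAt ℝ (fun θ => π θ x a) θ₀)
    (Pmat : (Fin κ → ℝ) → Matrix X X ℝ)
    (hPmat : ∀ θ x x', Pmat θ x x' = ∑ a, π θ x a * P x a x')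
    (cvec : (Fin κ → ℝ) → X → ℝ)
    (hcvec : ∀ θ x, cvec θ x = ∑ a, π θ x a * c x a)
    (V : (Fin κ → ℝ) → X → ℝ)
    (hV : ∀ θ, V θ = (1 - γ • Pmat θ)⁻¹.mulVec (cvec θ))
    (x₀ : X) (μ : X → ℝ) (hμ : ∀ x, μ x = (1 - γ • Pmat θ₀)⁻¹ x₀ x)
    (Q : X → A → ℝ)
    (hQ : ∀ x a, Q x a = c x a + γ * ∑ x', P x a x' * V θ₀ x') :
    DifferentiableAt ℝ (fun θ => V θ x₀) θ₀ ∧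
    fderiv ℝ (fun θ => V θ x₀) θ₀ =
      ∑ x, ∑ a, (μ x * Q x a) • fderiv ℝ (fun θ => π θ x a) θ₀ :=
  policy_gradient_theorem_general γ hγ0 hγ1 c P hP0 hP1 κ θ₀ π hπ0 hπ1 hdiff Pmat hPmat cvec hcvec V
    hV x₀ μ hμ Q hQ
end

section
/- Let X and A be finite nonempty sets, γ ∈ [0,1), c : X → A → ℝ, and P : X → A → X → ℝ a transition kernel with P(x,a,x') ≥ 0 and ∑_{x'} P(x,a,x') = 1 for all x, a. Let q : X → A → ℝ and ℓ : X → ℝ, and for each x ∈ X let S(x) = {p : A → ℝ | p ≥ 0, ∑_a p(a) = 1, ∑_a p(a)·q(x,a) ≤ ℓ(x)}; assume S(x) is nonempty for every x. Define the safe Bellman operator T[V](x) = inf_{p ∈ S(x)} ∑_a p(a)·(c(x,a) + γ·∑_{x'} P(x,a,x')·V(x')). Then: (i) T is monotone, i.e., V ≤ W componentwise implies T[V] ≤ T[W] componentwise; and (ii) T is a γ-contraction in the supremum norm, i.e., max_x |T[V](x) − T[W](x)| ≤ γ·max_x |V(x) − W(x)| for all V, W : X → ℝ. -/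
theorem safe_bellman_monotone_contraction {X A : Type*}
    [Fintype X] [Nonempty X] [Fintype A] [Nonempty A]
    (γ : ℝ) (hγ0 : 0 ≤ γ) (hγ1 : γ < 1)
    (c : X → A → ℝ) (P : X → A → X → ℝ)
    (hP0 : ∀ x a x', 0 ≤ P x a x') (hP1 : ∀ x a, ∑ x', P x a x' = 1)
    (q : X → A → ℝ) (ℓ : X → ℝ)
    (S : X → Set (A → ℝ))
    (hS : ∀ x, S x = {p : A → ℝ |
      (∀ a, 0 ≤ p a) ∧ ∑ a, p a = 1 ∧ ∑ a, p a * q x a ≤ ℓ x})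
    (hSne : ∀ x, (S x).Nonempty)
    (T : (X → ℝ) → X → ℝ)
    (hT : ∀ V x, T V x =
      sInf ((fun p : A → ℝ => ∑ a, p a * (c x a + γ * ∑ x', P x a x' * V x')) '' S x)) :
    (∀ V W : X → ℝ, (∀ x, V x ≤ W x) → ∀ x, T V x ≤ T W x) ∧
    (∀ V W : X → ℝ,
      (Finset.univ.sup' Finset.univ_nonempty fun x => |T V x - T W x|) ≤
        γ * Finset.univ.sup' Finset.univ_nonempty fun x => |V x - W x|) := by
  -- generic value of the objective
  set f : (X → ℝ) → X → (A → ℝ) → ℝ :=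
    fun V x p => ∑ a, p a * (c x a + γ * ∑ x', P x a x' * V x') with hf
  -- membership facts
  have hmem : ∀ x (p : A → ℝ), p ∈ S x →
      (∀ a, 0 ≤ p a) ∧ ∑ a, p a = 1 := by
    intro x p hp
    rw [hS x] at hp
    exact ⟨hp.1, hp.2.1⟩
  -- boundedness below
  have hbdd : ∀ (V : X → ℝ) (x : X), BddBelow (f V x '' S x) := by
    intro V x
    refine ⟨Finset.univ.inf' Finset.univ_nonempty
      (fun a => c x a + γ * ∑ x', P x a x' * V x'), ?_⟩
    rintro _ ⟨p, hp, rfl⟩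
    obtain ⟨hp0, hp1⟩ := hmem x p hp
    set m := Finset.univ.inf' Finset.univ_nonempty
      (fun a => c x a + γ * ∑ x', P x a x' * V x') with hm
    calc m = ∑ a, p a * m := by
            rw [← Finset.sum_mul, hp1, one_mul]
      _ ≤ f V x p := by
            apply Finset.sum_le_sum
            intro a _
            exact mul_le_mul_of_nonneg_left
              (Finset.inf'_le _ (Finset.mem_univ a)) (hp0 a)
  have hTle : ∀ (V : X → ℝ) (x : X) (p : A → ℝ), p ∈ S x → T V x ≤ f V x p := by
    intro V x p hp
    rw [hT V x]
    exact csInf_le (hbdd V x) ⟨p, hp, rfl⟩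
  -- key estimate: f V x p ≤ f W x p + γ * M where V - W ≤ M pointwise
  have hkey : ∀ (V W : X → ℝ) (M : ℝ), (∀ x', V x' - W x' ≤ M) →
      ∀ x (p : A → ℝ), p ∈ S x → f V x p ≤ f W x p + γ * M := by
    intro V W M hM x p hp
    obtain ⟨hp0, hp1⟩ := hmem x p hp
    have : f V x p - f W x p ≤ γ * M := by
      have h1 : f V x p - f W x p
          = ∑ a, p a * (γ * ∑ x', P x a x' * (V x' - W x')) := by
        simp only [hf, ← Finset.sum_sub_distrib, ← mul_sub]
        apply Finset.sum_congr rfl; intro a _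
        congr 1
        rw [add_sub_add_left_eq_sub, ← mul_sub]
        congr 1
        rw [← Finset.sum_sub_distrib]
        apply Finset.sum_congr rfl; intro x' _; ring
      rw [h1]
      have h2 : ∀ a, p a * (γ * ∑ x', P x a x' * (V x' - W x')) ≤ p a * (γ * M) := by
        intro a
        apply mul_le_mul_of_nonneg_left _ (hp0 a)
        apply mul_le_mul_of_nonneg_left _ hγ0
        calc ∑ x', P x a x' * (V x' - W x') ≤ ∑ x', P x a x' * M := by
              apply Finset.sum_le_sum
              intro x' _
              exact mul_le_mul_of_nonneg_left (hM x') (hP0 x a x')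
          _ = M := by rw [← Finset.sum_mul, hP1 x a, one_mul]
      calc ∑ a, p a * (γ * ∑ x', P x a x' * (V x' - W x'))
          ≤ ∑ a, p a * (γ * M) := Finset.sum_le_sum fun a _ => h2 a
        _ = γ * M := by rw [← Finset.sum_mul, hp1, one_mul]
    linarith
  have hTkey : ∀ (V W : X → ℝ) (M : ℝ), (∀ x', V x' - W x' ≤ M) →
      ∀ x, T V x ≤ T W x + γ * M := by
    intro V W M hM x
    have : T V x - γ * M ≤ T W x := by
      rw [hT W x]
      apply le_csInf ((hSne x).image _)
      rintro _ ⟨p, hp, rfl⟩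
      have := hTle V x p hp
      have := hkey V W M hM x p hp
      linarith
    linarith
  constructor
  · intro V W hVW x
    have := hTkey V W 0 (fun x' => by linarith [hVW x']) x
    simpa using this
  · intro V W
    set M := Finset.univ.sup' Finset.univ_nonempty fun x => |V x - W x| with hM
    have hMV : ∀ x', V x' - W x' ≤ M := fun x' =>
      le_trans (le_abs_self _)
        (Finset.le_sup' (fun y => |V y - W y|) (Finset.mem_univ x'))
    have hMW : ∀ x', W x' - V x' ≤ M := fun x' =>
      le_trans (by rw [abs_sub_comm]; exact le_abs_self _)
        (Finset.le_sup' (fun y => |V y - W y|) (Finset.mem_univ x'))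
    apply Finset.sup'_le
    intro x _
    rw [abs_sub_le_iff]
    constructor
    · have := hTkey V W M hMV x; linarith
    · have := hTkey W V M hMW x; linarith
end
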